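/- arXiv:1405.6469 — 2 statements merged into one kernel-verified Lean document; each statement's English description precedes it below -/
import Mathlib

section
/- Let L↓ < L↑ < U↓ < U↑ be real numbers, l > 0, 0 < s < l, and v ∈ ℝ. Then for all x, y ∈ (L↓, U↑), |ρ(x) − ρ(y)| ≤ K_ρ·|x − y|; that is, ρ is Lipschitz on (L↓, U↑) with Lipschitz constant at most K_ρ := K_{1,2} + K_{3,4} + K_{5,6} + K_{7,8}. -/
/-- The term `σ_j(a,b)` from the series expansion of the Brownian bridge
non-exit probability. -/
noncomputable def sigmaJ (L U r a b : ℝ) (j : ℕ) : ℝ :=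
  Real.exp (-(2/r) * (((U-L)*j + L - a) * ((U-L)*j + L - b))) +
  Real.exp (-(2/r) * (((U-L)*j - U + a) * ((U-L)*j - U + b)))

/-- The term `τ_j(a,b)` from the series expansion of the Brownian bridge
non-exit probability. -/
noncomputable def tauJ (L U r a b : ℝ) (j : ℕ) : ℝ :=
  Real.exp (-(2*(U-L)*j/r) * ((U-L)*j + a - b)) +
  Real.exp (-(2*(U-L)*j/r) * ((U-L)*j + b - a))

/-- `γ(L,U;r,a,b) = 1 - ∑_{j=1}^∞ (σ_j(a,b) - τ_j(a,b))` if `a, b ∈ (L,U)`, else `0`.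
(The series is indexed by `j = k+1`, `k : ℕ`.) -/
noncomputable def gammaFn (L U r a b : ℝ) : ℝ :=
  if a ∈ Set.Ioo L U ∧ b ∈ Set.Ioo L U then
    1 - ∑' k : ℕ, (sigmaJ L U r a b (k+1) - tauJ L U r a b (k+1))
  else 0

/-- `K(L,U,r) = (8(U-L)/r) ∑_{j=1}^∞ j exp(-(2/r)(U-L)²(j-1)²)`
(indexed by `j = k+1`, `k : ℕ`). -/
noncomputable def Kconst (L U r : ℝ) : ℝ :=
  (8*(U-L)/r) * ∑' k : ℕ, ((k:ℝ)+1) * Real.exp (-(2/r) * (U-L)^2 * (k:ℝ)^2)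


/-- `ρ(x) = γ₁(x)γ₂(x) - γ₃(x)γ₄(x) - γ₅(x)γ₆(x) + γ₇(x)γ₈(x)`, where
`γ₁(x) = γ(L↓,U↑;s,0,x)`, `γ₂(x) = γ(L↓,U↑;l-s,x,v)`, `γ₃(x) = γ(L↑,U↑;s,0,x)`,
`γ₄(x) = γ(L↑,U↑;l-s,x,v)`, `γ₅(x) = γ(L↓,U↓;s,0,x)`, `γ₆(x) = γ(L↓,U↓;l-s,x,v)`,
`γ₇(x) = γ(L↑,U↓;s,0,x)`, `γ₈(x) = γ(L↑,U↓;l-s,x,v)`. -/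
noncomputable def rhoFn (Ldown Lup Udown Uup l s v x : ℝ) : ℝ :=
  gammaFn Ldown Uup s 0 x * gammaFn Ldown Uup (l-s) x v
  - gammaFn Lup Uup s 0 x * gammaFn Lup Uup (l-s) x v
  - gammaFn Ldown Udown s 0 x * gammaFn Ldown Udown (l-s) x v
  + gammaFn Lup Udown s 0 x * gammaFn Lup Udown (l-s) x v

/-- `K_ρ = K_{1,2} + K_{3,4} + K_{5,6} + K_{7,8}`. -/
noncomputable def Krho (Ldown Lup Udown Uup l s : ℝ) : ℝ :=
  2 * Kconst Ldown Uup s * Kconst Ldown Uup (l-s) * (Uup - Ldown)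
  + 2 * Kconst Lup Uup s * Kconst Lup Uup (l-s) * (Uup - Lup)
  + 2 * Kconst Ldown Udown s * Kconst Ldown Udown (l-s) * (Udown - Ldown)
  + 2 * Kconst Lup Udown s * Kconst Lup Udown (l-s) * (Udown - Lup)


open Filter

lemma exp_sub_exp_abs_le (x y : ℝ) :
    |Real.exp x - Real.exp y| ≤ max (Real.exp x) (Real.exp y) * |x - y| := by
  wlog h : y ≤ x generalizing x y
  · rw [abs_sub_comm, abs_sub_comm x y, max_comm]
    exact this _ _ (le_of_not_ge h)
  rw [abs_of_nonneg (sub_nonneg.2 (Real.exp_le_exp.2 h)), abs_of_nonneg (sub_nonneg.2 h),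
    max_eq_left (Real.exp_le_exp.2 h)]
  have h1 := Real.add_one_le_exp (y - x)
  have h2 : Real.exp (y - x) * Real.exp x = Real.exp y := by
    rw [← Real.exp_add]; ring_nf
  have h3 := Real.exp_pos x
  nlinarith [mul_le_mul_of_nonneg_right h1 h3.le]

lemma exp_pair {c A B B' dk dk1 E d : ℝ} (hc : 0 < c) (hdk : 0 ≤ dk)
    (hA1 : dk ≤ A) (hA2 : A ≤ dk1) (hB : dk ≤ B) (hB' : dk ≤ B')
    (hE : Real.exp (-c * dk ^ 2) ≤ E) (hBB' : |B - B'| ≤ d) :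
    |Real.exp (-c * (A * B)) - Real.exp (-c * (A * B'))| ≤ c * dk1 * E * d := by
  have hA0 : 0 ≤ A := hdk.trans hA1
  have hE0 : 0 ≤ E := (Real.exp_pos _).le.trans hE
  have hd0 : 0 ≤ d := (abs_nonneg _).trans hBB'
  have hca : (0:ℝ) ≤ c * A := mul_nonneg hc.le hA0
  have key := exp_sub_exp_abs_le (-c * (A * B)) (-c * (A * B'))
  have harg : |(-c * (A * B)) - (-c * (A * B'))| = c * A * |B - B'| := by
    rw [show (-c * (A * B)) - (-c * (A * B')) = -((c * A) * (B - B')) by ring, abs_neg,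
      abs_mul, abs_of_nonneg hca]
  rw [harg] at key
  have hAB : dk * dk ≤ A * B := mul_le_mul hA1 hB hdk hA0
  have hAB' : dk * dk ≤ A * B' := mul_le_mul hA1 hB' hdk hA0
  have hsq : dk ^ 2 = dk * dk := sq dk
  have hmax : max (Real.exp (-c * (A * B))) (Real.exp (-c * (A * B'))) ≤ E := by
    apply max_le <;> refine le_trans (Real.exp_le_exp.2 ?_) hE <;>
      nlinarith [mul_le_mul_of_nonneg_left hAB hc.le, mul_le_mul_of_nonneg_left hAB' hc.le]
  calc |Real.exp (-c * (A * B)) - Real.exp (-c * (A * B'))|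
      ≤ max (Real.exp (-c * (A * B))) (Real.exp (-c * (A * B'))) * (c * A * |B - B'|) := key
    _ ≤ E * (c * dk1 * d) := by
        apply mul_le_mul hmax ?_ (mul_nonneg hca (abs_nonneg _)) hE0
        have h1 : c * A * |B - B'| ≤ c * dk1 * |B - B'| :=
          mul_le_mul_of_nonneg_right (mul_le_mul_of_nonneg_left hA2 hc.le) (abs_nonneg _)
        exact h1.trans (mul_le_mul_of_nonneg_left hBB' (mul_nonneg hc.le (hdk.trans (hA1.trans hA2))))
    _ = c * dk1 * E * d := by ring

lemma exp_single {c A B dk E : ℝ} (hc : 0 < c) (hdk : 0 ≤ dk) (hA : dk ≤ A) (hB : dk ≤ B)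
    (hE : Real.exp (-c * dk ^ 2) ≤ E) : Real.exp (-c * (A * B)) ≤ E := by
  have hA0 : 0 ≤ A := hdk.trans hA
  have hAB : dk * dk ≤ A * B := mul_le_mul hA hB hdk hA0
  refine le_trans (Real.exp_le_exp.2 ?_) hE
  nlinarith [mul_le_mul_of_nonneg_left hAB hc.le]

lemma summable_kE_gen {t : ℝ} (ht : 0 < t) :
    Summable (fun k : ℕ => ((k : ℝ) + 1) * Real.exp (-t * (k : ℝ) ^ 2)) := by
  have hq : ‖Real.exp (-t)‖ < 1 := by
    rw [Real.norm_eq_abs, abs_of_pos (Real.exp_pos _), Real.exp_lt_one_iff]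
    linarith
  have h1 : Summable (fun k : ℕ => ((k : ℝ) + 1) * Real.exp (-t) ^ k) := by
    have h2 := summable_pow_mul_geometric_of_norm_lt_one 1 hq
    have h3 := summable_geometric_of_norm_lt_one hq
    simpa [pow_one, add_mul, one_mul] using h2.add h3
  refine h1.of_nonneg_of_le (fun k => by positivity) (fun k => ?_)
  have hk2 : (k : ℝ) ≤ (k : ℝ) ^ 2 := by
    exact_mod_cast Nat.le_self_pow two_ne_zero k
  have : Real.exp (-t * (k : ℝ) ^ 2) ≤ Real.exp (-t) ^ k := by
    rw [← Real.exp_nat_mul]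
    apply Real.exp_le_exp.2
    nlinarith
  have hk0 : (0:ℝ) ≤ (k : ℝ) + 1 := by positivity
  nlinarith [Real.exp_pos (-t * (k:ℝ)^2)]

lemma tsum_telescope_eq {g : ℕ → ℝ} (hmono : ∀ k, g (k + 1) ≤ g k)
    (h0 : Tendsto g atTop (nhds 0)) : ∑' k : ℕ, (g k - g (k + 1)) = g 0 := by
  have hant : Antitone g := antitone_nat_of_succ_le hmono
  have hnn : ∀ n, 0 ≤ g n := fun n =>
    le_of_tendsto h0 (eventually_atTop.2 ⟨n, fun m hm => hant hm⟩)
  have hsum : ∀ n, ∑ i ∈ Finset.range n, (g i - g (i + 1)) = g 0 - g n := fun n =>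
    Finset.sum_range_sub' g n
  have hS : Summable (fun k : ℕ => g k - g (k + 1)) :=
    summable_of_sum_range_le (fun n => sub_nonneg.2 (hmono n))
      (fun n => by rw [hsum]; linarith [hnn n])
  refine HasSum.tsum_eq ?_
  rw [hS.hasSum_iff_tendsto_nat]
  have : Tendsto (fun n => g 0 - g n) atTop (nhds (g 0 - 0)) := tendsto_const_nhds.sub h0
  simpa [hsum] using this
noncomputable def Sfun (L U r a b : ℝ) : ℝ :=
  ∑' k : ℕ, (sigmaJ L U r a b (k+1) - tauJ L U r a b (k+1))

variable {L U r a : ℝ}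

lemma summable_KE (hLU : L < U) (hr : 0 < r) :
    Summable (fun k : ℕ => ((k:ℝ)+1) * Real.exp (-(2/r) * (U-L)^2 * (k:ℝ)^2)) := by
  have hD : 0 < U - L := sub_pos.2 hLU
  have h := summable_kE_gen (t := 2/r*(U-L)^2) (by positivity)
  exact h.congr (fun k => by rw [show -(2/r*(U-L)^2) * (k:ℝ)^2 = -(2/r)*(U-L)^2*(k:ℝ)^2 by ring])

lemma F_term_lip (hLU : L < U) (hr : 0 < r) (ha : a ∈ Set.Icc L U)
    {b b' : ℝ} (hb : b ∈ Set.Icc L U) (hb' : b' ∈ Set.Icc L U) (k : ℕ) :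
    |(sigmaJ L U r a b (k+1) - tauJ L U r a b (k+1)) -
     (sigmaJ L U r a b' (k+1) - tauJ L U r a b' (k+1))| ≤
    8*(U-L)/r * ((k:ℝ)+1) * Real.exp (-(2/r) * (U-L)^2 * (k:ℝ)^2) * |b - b'| := by
  obtain ⟨ha1, ha2⟩ := ha
  obtain ⟨hb1, hb2⟩ := hb
  obtain ⟨hb1', hb2'⟩ := hb'
  have hD : 0 < U - L := sub_pos.2 hLU
  have hc : 0 < 2/r := by positivity
  have hdk : 0 ≤ (U-L)*(k:ℝ) := by positivity
  have hkk : (U-L)*((k:ℝ)+1) = (U-L)*(k:ℝ) + (U-L) := by ring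
  have hE : Real.exp (-(2/r) * ((U-L)*(k:ℝ)) ^ 2) ≤ Real.exp (-(2/r) * (U-L)^2 * (k:ℝ)^2) :=
    le_of_eq (by congr 1; ring)
  simp only [sigmaJ, tauJ]
  push_cast
  rw [show -(2*(U-L)*((k:ℝ)+1)/r) * ((U-L)*((k:ℝ)+1) + a - b)
      = -(2/r) * (((U-L)*((k:ℝ)+1)) * ((U-L)*((k:ℝ)+1) + a - b)) by ring,
    show -(2*(U-L)*((k:ℝ)+1)/r) * ((U-L)*((k:ℝ)+1) + b - a)
      = -(2/r) * (((U-L)*((k:ℝ)+1)) * ((U-L)*((k:ℝ)+1) + b - a)) by ring,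
    show -(2*(U-L)*((k:ℝ)+1)/r) * ((U-L)*((k:ℝ)+1) + a - b')
      = -(2/r) * (((U-L)*((k:ℝ)+1)) * ((U-L)*((k:ℝ)+1) + a - b')) by ring,
    show -(2*(U-L)*((k:ℝ)+1)/r) * ((U-L)*((k:ℝ)+1) + b' - a)
      = -(2/r) * (((U-L)*((k:ℝ)+1)) * ((U-L)*((k:ℝ)+1) + b' - a)) by ring]
  have h1 := exp_pair (c := 2/r) (A := (U-L)*((k:ℝ)+1) + L - a)
    (B := (U-L)*((k:ℝ)+1) + L - b) (B' := (U-L)*((k:ℝ)+1) + L - b')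
    (dk := (U-L)*(k:ℝ)) (dk1 := (U-L)*((k:ℝ)+1)) (d := |b - b'|)
    hc hdk (by linarith) (by linarith) (by linarith) (by linarith) hE
    (le_of_eq (by rw [show ((U-L)*((k:ℝ)+1) + L - b) - ((U-L)*((k:ℝ)+1) + L - b')
      = -(b - b') by ring, abs_neg]))
  have h2 := exp_pair (c := 2/r) (A := (U-L)*((k:ℝ)+1) - U + a)
    (B := (U-L)*((k:ℝ)+1) - U + b) (B' := (U-L)*((k:ℝ)+1) - U + b')
    (dk := (U-L)*(k:ℝ)) (dk1 := (U-L)*((k:ℝ)+1)) (d := |b - b'|)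
    hc hdk (by linarith) (by linarith) (by linarith) (by linarith) hE
    (le_of_eq (by rw [show ((U-L)*((k:ℝ)+1) - U + b) - ((U-L)*((k:ℝ)+1) - U + b')
      = b - b' by ring]))
  have h3 := exp_pair (c := 2/r) (A := (U-L)*((k:ℝ)+1))
    (B := (U-L)*((k:ℝ)+1) + a - b) (B' := (U-L)*((k:ℝ)+1) + a - b')
    (dk := (U-L)*(k:ℝ)) (dk1 := (U-L)*((k:ℝ)+1)) (d := |b - b'|)
    hc hdk (by linarith) (by linarith) (by linarith) (by linarith) hE
    (le_of_eq (by rw [show ((U-L)*((k:ℝ)+1) + a - b) - ((U-L)*((k:ℝ)+1) + a - b')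
      = -(b - b') by ring, abs_neg]))
  have h4 := exp_pair (c := 2/r) (A := (U-L)*((k:ℝ)+1))
    (B := (U-L)*((k:ℝ)+1) + b - a) (B' := (U-L)*((k:ℝ)+1) + b' - a)
    (dk := (U-L)*(k:ℝ)) (dk1 := (U-L)*((k:ℝ)+1)) (d := |b - b'|)
    hc hdk (by linarith) (by linarith) (by linarith) (by linarith) hE
    (le_of_eq (by rw [show ((U-L)*((k:ℝ)+1) + b - a) - ((U-L)*((k:ℝ)+1) + b' - a)
      = b - b' by ring]))
  rw [show 8*(U-L)/r * ((k:ℝ)+1) * Real.exp (-(2/r) * (U-L)^2 * (k:ℝ)^2) * |b - b'|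
    = 4 * (2/r * ((U-L)*((k:ℝ)+1)) * Real.exp (-(2/r) * (U-L)^2 * (k:ℝ)^2) * |b - b'|) by ring]
  rw [abs_le] at h1 h2 h3 h4 ⊢
  constructor <;> linarith [h1.1, h1.2, h2.1, h2.2, h3.1, h3.2, h4.1, h4.2]

lemma F_term_abs (hLU : L < U) (hr : 0 < r) (ha : a ∈ Set.Icc L U)
    {b : ℝ} (hb : b ∈ Set.Icc L U) (k : ℕ) :
    |sigmaJ L U r a b (k+1) - tauJ L U r a b (k+1)| ≤
      4 * Real.exp (-(2/r) * (U-L)^2 * (k:ℝ)^2) := by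
  obtain ⟨ha1, ha2⟩ := ha
  obtain ⟨hb1, hb2⟩ := hb
  have hD : 0 < U - L := sub_pos.2 hLU
  have hc : 0 < 2/r := by positivity
  have hdk : 0 ≤ (U-L)*(k:ℝ) := by positivity
  have hkk : (U-L)*((k:ℝ)+1) = (U-L)*(k:ℝ) + (U-L) := by ring
  have hE : Real.exp (-(2/r) * ((U-L)*(k:ℝ)) ^ 2) ≤ Real.exp (-(2/r) * (U-L)^2 * (k:ℝ)^2) :=
    le_of_eq (by congr 1; ring)
  simp only [sigmaJ, tauJ]
  push_cast
  rw [show -(2*(U-L)*((k:ℝ)+1)/r) * ((U-L)*((k:ℝ)+1) + a - b)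
      = -(2/r) * (((U-L)*((k:ℝ)+1)) * ((U-L)*((k:ℝ)+1) + a - b)) by ring,
    show -(2*(U-L)*((k:ℝ)+1)/r) * ((U-L)*((k:ℝ)+1) + b - a)
      = -(2/r) * (((U-L)*((k:ℝ)+1)) * ((U-L)*((k:ℝ)+1) + b - a)) by ring]
  have h1 := exp_single (c := 2/r) (A := (U-L)*((k:ℝ)+1) + L - a)
    (B := (U-L)*((k:ℝ)+1) + L - b) (dk := (U-L)*(k:ℝ))
    hc hdk (by linarith) (by linarith) hE
  have h2 := exp_single (c := 2/r) (A := (U-L)*((k:ℝ)+1) - U + a)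
    (B := (U-L)*((k:ℝ)+1) - U + b) (dk := (U-L)*(k:ℝ))
    hc hdk (by linarith) (by linarith) hE
  have h3 := exp_single (c := 2/r) (A := (U-L)*((k:ℝ)+1))
    (B := (U-L)*((k:ℝ)+1) + a - b) (dk := (U-L)*(k:ℝ))
    hc hdk (by linarith) (by linarith) hE
  have h4 := exp_single (c := 2/r) (A := (U-L)*((k:ℝ)+1))
    (B := (U-L)*((k:ℝ)+1) + b - a) (dk := (U-L)*(k:ℝ))
    hc hdk (by linarith) (by linarith) hE
  have p1 := Real.exp_pos (-(2/r) * (((U-L)*((k:ℝ)+1) + L - a) * ((U-L)*((k:ℝ)+1) + L - b)))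
  have p2 := Real.exp_pos (-(2/r) * (((U-L)*((k:ℝ)+1) - U + a) * ((U-L)*((k:ℝ)+1) - U + b)))
  have p3 := Real.exp_pos (-(2/r) * (((U-L)*((k:ℝ)+1)) * ((U-L)*((k:ℝ)+1) + a - b)))
  have p4 := Real.exp_pos (-(2/r) * (((U-L)*((k:ℝ)+1)) * ((U-L)*((k:ℝ)+1) + b - a)))
  rw [abs_le]
  constructor <;> linarith

lemma summable_F (hLU : L < U) (hr : 0 < r) (ha : a ∈ Set.Icc L U)
    {b : ℝ} (hb : b ∈ Set.Icc L U) :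
    Summable (fun k : ℕ => sigmaJ L U r a b (k+1) - tauJ L U r a b (k+1)) := by
  apply Summable.of_abs
  refine ((summable_KE hLU hr).mul_left 4).of_nonneg_of_le (fun k => abs_nonneg _) (fun k => ?_)
  refine (F_term_abs hLU hr ha hb k).trans ?_
  have hp := (Real.exp_pos (-(2/r) * (U-L)^2 * (k:ℝ)^2)).le
  have hk : (0:ℝ) ≤ (k:ℝ) := Nat.cast_nonneg k
  nlinarith
lemma abs_tsum_le_tsum_abs' {f : ℕ → ℝ} (h : Summable fun k => |f k|) :
    |∑' k, f k| ≤ ∑' k, |f k| := by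
  have h' : Summable fun k => ‖f k‖ := by simpa [Real.norm_eq_abs] using h
  simpa [Real.norm_eq_abs] using norm_tsum_le_tsum_norm h'

set_option maxHeartbeats 1000000 in
lemma Sfun_lip (hLU : L < U) (hr : 0 < r) (ha : a ∈ Set.Icc L U)
    {b b' : ℝ} (hb : b ∈ Set.Icc L U) (hb' : b' ∈ Set.Icc L U) :
    |Sfun L U r a b - Sfun L U r a b'| ≤ Kconst L U r * |b - b'| := by
  have hsb := summable_F hLU hr ha hb
  have hsb' := summable_F hLU hr ha hb'
  have hcomp : Summable (fun k : ℕ =>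
      8*(U-L)/r * ((k:ℝ)+1) * Real.exp (-(2/r) * (U-L)^2 * (k:ℝ)^2) * |b - b'|) :=
    (((summable_KE hLU hr).mul_left (8*(U-L)/r)).mul_right |b - b'|).congr
      (fun k => by ring)
  have habs : Summable (fun k : ℕ =>
      |(sigmaJ L U r a b (k+1) - tauJ L U r a b (k+1)) -
       (sigmaJ L U r a b' (k+1) - tauJ L U r a b' (k+1))|) :=
    hcomp.of_nonneg_of_le (fun k => abs_nonneg _) (fun k => F_term_lip hLU hr ha hb hb' k)
  rw [Sfun, Sfun, ← Summable.tsum_sub hsb hsb']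
  calc |∑' k : ℕ, ((sigmaJ L U r a b (k+1) - tauJ L U r a b (k+1)) -
          (sigmaJ L U r a b' (k+1) - tauJ L U r a b' (k+1)))|
      ≤ ∑' k : ℕ, |(sigmaJ L U r a b (k+1) - tauJ L U r a b (k+1)) -
          (sigmaJ L U r a b' (k+1) - tauJ L U r a b' (k+1))| :=
        abs_tsum_le_tsum_abs' habs
    _ ≤ ∑' k : ℕ, 8*(U-L)/r * ((k:ℝ)+1) * Real.exp (-(2/r) * (U-L)^2 * (k:ℝ)^2) * |b - b'| :=
        Summable.tsum_le_tsum (fun k => F_term_lip hLU hr ha hb hb' k) habs hcomp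
    _ = ∑' k : ℕ, 8*(U-L)/r * ((((k:ℝ)+1) * Real.exp (-(2/r) * (U-L)^2 * (k:ℝ)^2)) * |b - b'|) :=
        tsum_congr (fun k => by ring)
    _ = 8*(U-L)/r * ∑' k : ℕ, (((k:ℝ)+1) * Real.exp (-(2/r) * (U-L)^2 * (k:ℝ)^2)) * |b - b'| :=
        tsum_mul_left
    _ = 8*(U-L)/r * ((∑' k : ℕ, ((k:ℝ)+1) * Real.exp (-(2/r) * (U-L)^2 * (k:ℝ)^2)) * |b - b'|) :=
        by rw [tsum_mul_right]
    _ = Kconst L U r * |b - b'| := by rw [Kconst]; ring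

lemma telescope_exp (hLU : L < U) (hr : 0 < r) {w : ℝ} (hw : 0 ≤ w) :
    ∑' k : ℕ, (Real.exp (-(2/r) * ((U-L)*(k:ℝ) * ((U-L)*(k:ℝ) + w)))
      - Real.exp (-(2/r) * ((U-L)*((k:ℝ)+1) * ((U-L)*((k:ℝ)+1) + w)))) = 1 := by
  have hD : 0 < U - L := sub_pos.2 hLU
  have hc : 0 < 2/r := by positivity
  set g : ℕ → ℝ := fun m => Real.exp (-(2/r) * ((U-L)*(m:ℝ) * ((U-L)*(m:ℝ) + w))) with hg
  have hcongr : ∀ k : ℕ, (Real.exp (-(2/r) * ((U-L)*(k:ℝ) * ((U-L)*(k:ℝ) + w)))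
      - Real.exp (-(2/r) * ((U-L)*((k:ℝ)+1) * ((U-L)*((k:ℝ)+1) + w)))) = g k - g (k+1) := by
    intro k
    rw [hg]
    push_cast
    ring_nf
  have hmono : ∀ k : ℕ, g (k+1) ≤ g k := by
    intro m
    rw [hg]
    apply Real.exp_le_exp.2
    push_cast
    have hm : (0:ℝ) ≤ (m:ℝ) := Nat.cast_nonneg m
    have hX : (U-L)*(m:ℝ) * ((U-L)*(m:ℝ) + w) ≤ (U-L)*((m:ℝ)+1) * ((U-L)*((m:ℝ)+1) + w) := by
      nlinarith [mul_nonneg hD.le hm, mul_nonneg hD.le hw, sq_nonneg (U-L)]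
    nlinarith [mul_le_mul_of_nonneg_left hX hc.le]
  have h0 : Filter.Tendsto g Filter.atTop (nhds 0) := by
    have hq1 : Real.exp (-(2/r * (U-L)^2)) < 1 := by
      rw [Real.exp_lt_one_iff]
      have : 0 < 2/r*(U-L)^2 := by positivity
      linarith
    have hq0 : 0 ≤ Real.exp (-(2/r * (U-L)^2)) := (Real.exp_pos _).le
    apply squeeze_zero (fun m => (Real.exp_pos _).le)
      (g := fun m : ℕ => Real.exp (-(2/r * (U-L)^2)) ^ m)
    · intro m
      show Real.exp (-(2/r) * ((U-L)*(m:ℝ) * ((U-L)*(m:ℝ) + w))) ≤ _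
      rw [← Real.exp_nat_mul]
      apply Real.exp_le_exp.2
      have hm2 : (m:ℝ) ≤ (m:ℝ)^2 := by exact_mod_cast Nat.le_self_pow two_ne_zero m
      have hm : (0:ℝ) ≤ (m:ℝ) := Nat.cast_nonneg m
      have hX : 2/r*(U-L)^2*(m:ℝ) ≤ 2/r * ((U-L)*(m:ℝ) * ((U-L)*(m:ℝ) + w)) := by
        rw [show 2/r * ((U-L)*(m:ℝ) * ((U-L)*(m:ℝ) + w)) = 2/r*(U-L)^2*(m:ℝ)^2 + 2/r*((U-L)*(m:ℝ)*w) by ring]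
        nlinarith [mul_nonneg (mul_nonneg hc.le (mul_nonneg hD.le hm)) hw,
          mul_le_mul_of_nonneg_left hm2 (by positivity : (0:ℝ) ≤ 2/r*(U-L)^2)]
      linarith
    · exact tendsto_pow_atTop_nhds_zero_of_lt_one hq0 hq1
  rw [tsum_congr hcongr, tsum_telescope_eq hmono h0, hg]
  norm_num

lemma Sfun_boundary_U (hLU : L < U) (hr : 0 < r) (ha : a ∈ Set.Icc L U) :
    Sfun L U r a U = 1 := by
  rw [Sfun]
  rw [tsum_congr (g := fun k : ℕ =>
      (Real.exp (-(2/r) * ((U-L)*(k:ℝ) * ((U-L)*(k:ℝ) + (U-a))))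
      - Real.exp (-(2/r) * ((U-L)*((k:ℝ)+1) * ((U-L)*((k:ℝ)+1) + (U-a)))))) ?_]
  · exact telescope_exp hLU hr (by linarith [ha.2])
  · intro k
    simp only [sigmaJ, tauJ]
    push_cast
    rw [show -(2/r) * (((U-L)*((k:ℝ)+1) - U + a) * ((U-L)*((k:ℝ)+1) - U + U))
        = -(2*(U-L)*((k:ℝ)+1)/r) * ((U-L)*((k:ℝ)+1) + a - U) by ring,
      show -(2/r) * (((U-L)*((k:ℝ)+1) + L - a) * ((U-L)*((k:ℝ)+1) + L - U))
        = -(2/r) * ((U-L)*(k:ℝ) * ((U-L)*(k:ℝ) + (U-a))) by ring,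
      show -(2*(U-L)*((k:ℝ)+1)/r) * ((U-L)*((k:ℝ)+1) + U - a)
        = -(2/r) * ((U-L)*((k:ℝ)+1) * ((U-L)*((k:ℝ)+1) + (U-a))) by ring]
    ring

lemma Sfun_boundary_L (hLU : L < U) (hr : 0 < r) (ha : a ∈ Set.Icc L U) :
    Sfun L U r a L = 1 := by
  rw [Sfun]
  rw [tsum_congr (g := fun k : ℕ =>
      (Real.exp (-(2/r) * ((U-L)*(k:ℝ) * ((U-L)*(k:ℝ) + (a-L))))
      - Real.exp (-(2/r) * ((U-L)*((k:ℝ)+1) * ((U-L)*((k:ℝ)+1) + (a-L)))))) ?_]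
  · exact telescope_exp hLU hr (by linarith [ha.1])
  · intro k
    simp only [sigmaJ, tauJ]
    push_cast
    rw [show -(2/r) * (((U-L)*((k:ℝ)+1) + L - a) * ((U-L)*((k:ℝ)+1) + L - L))
        = -(2*(U-L)*((k:ℝ)+1)/r) * ((U-L)*((k:ℝ)+1) + L - a) by ring,
      show -(2/r) * (((U-L)*((k:ℝ)+1) - U + a) * ((U-L)*((k:ℝ)+1) - U + L))
        = -(2/r) * ((U-L)*(k:ℝ) * ((U-L)*(k:ℝ) + (a-L))) by ring,
      show -(2*(U-L)*((k:ℝ)+1)/r) * ((U-L)*((k:ℝ)+1) + a - L)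
        = -(2/r) * ((U-L)*((k:ℝ)+1) * ((U-L)*((k:ℝ)+1) + (a-L))) by ring]
    ring
lemma gammaFn_eq (L U r a b : ℝ) : gammaFn L U r a b =
    if a ∈ Set.Ioo L U ∧ b ∈ Set.Ioo L U then 1 - Sfun L U r a b else 0 := rfl

lemma Kconst_nonneg {L U r : ℝ} (hLU : L < U) (hr : 0 < r) : 0 ≤ Kconst L U r := by
  have hD : 0 < U - L := sub_pos.2 hLU
  refine mul_nonneg (by positivity) (tsum_nonneg fun k => by positivity)

lemma gamma_edge {L U r a : ℝ} (hLU : L < U) (hr : 0 < r) (hA : a ∈ Set.Ioo L U)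
    {b b' : ℝ} (hB : b ∈ Set.Ioo L U) (hB' : b' ∉ Set.Ioo L U) :
    |gammaFn L U r a b - gammaFn L U r a b'| ≤ Kconst L U r * |b - b'| := by
  have haI : a ∈ Set.Icc L U := Set.Ioo_subset_Icc_self hA
  have hbI : b ∈ Set.Icc L U := Set.Ioo_subset_Icc_self hB
  have hK := Kconst_nonneg hLU hr
  rw [gammaFn_eq, if_pos ⟨hA, hB⟩, gammaFn_eq, if_neg (fun h => hB' h.2), sub_zero]
  rcases le_or_gt b' L with h | h
  · have h1 : Sfun L U r a L = 1 := Sfun_boundary_L hLU hr haI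
    have h2 := Sfun_lip hLU hr haI (Set.left_mem_Icc.2 hLU.le) hbI
    rw [h1] at h2
    refine h2.trans (mul_le_mul_of_nonneg_left ?_ hK)
    rw [abs_sub_comm, abs_of_nonneg (by linarith [hB.1] : (0:ℝ) ≤ b - L),
      abs_of_nonneg (by linarith [hB.1] : (0:ℝ) ≤ b - b')]
    linarith [hB.1]
  · have hU : U ≤ b' := by
      by_contra hcon; push_neg at hcon; exact hB' ⟨h, hcon⟩
    have h1 : Sfun L U r a U = 1 := Sfun_boundary_U hLU hr haI
    have h2 := Sfun_lip hLU hr haI (Set.right_mem_Icc.2 hLU.le) hbI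
    rw [h1] at h2
    refine h2.trans (mul_le_mul_of_nonneg_left ?_ hK)
    rw [abs_sub_comm, abs_of_nonpos (by linarith [hB.2] : b - U ≤ (0:ℝ)),
      abs_of_nonpos (by linarith [hB.2] : b - b' ≤ (0:ℝ))]
    linarith [hB.2]

lemma gammaFn_lip {L U r : ℝ} (hLU : L < U) (hr : 0 < r) (a b b' : ℝ) :
    |gammaFn L U r a b - gammaFn L U r a b'| ≤ Kconst L U r * |b - b'| := by
  have hK := Kconst_nonneg hLU hr
  by_cases hA : a ∈ Set.Ioo L U
  · by_cases hB : b ∈ Set.Ioo L U <;> by_cases hB' : b' ∈ Set.Ioo L U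
    · rw [gammaFn_eq, if_pos ⟨hA, hB⟩, gammaFn_eq, if_pos ⟨hA, hB'⟩,
        show (1 - Sfun L U r a b) - (1 - Sfun L U r a b')
          = -(Sfun L U r a b - Sfun L U r a b') by ring, abs_neg]
      exact Sfun_lip hLU hr (Set.Ioo_subset_Icc_self hA)
        (Set.Ioo_subset_Icc_self hB) (Set.Ioo_subset_Icc_self hB')
    · exact gamma_edge hLU hr hA hB hB'
    · rw [abs_sub_comm, abs_sub_comm b b']
      exact gamma_edge hLU hr hA hB' hB
    · rw [gammaFn_eq, if_neg (fun h => hB h.2), gammaFn_eq, if_neg (fun h => hB' h.2)]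
      simpa using mul_nonneg hK (abs_nonneg _)
  · rw [gammaFn_eq, if_neg (fun h => hA h.1), gammaFn_eq, if_neg (fun h => hA h.1)]
    simpa using mul_nonneg hK (abs_nonneg _)

lemma gammaFn_abs {L U r : ℝ} (hLU : L < U) (hr : 0 < r) (a b : ℝ) :
    |gammaFn L U r a b| ≤ Kconst L U r * (U - L) := by
  have hK := Kconst_nonneg hLU hr
  by_cases hB : b ∈ Set.Ioo L U
  · have h := gammaFn_lip hLU hr a b U
    have hU0 : gammaFn L U r a U = 0 := by
      rw [gammaFn_eq, if_neg]
      rintro ⟨-, hu⟩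
      exact lt_irrefl U hu.2
    rw [hU0, sub_zero] at h
    refine h.trans (mul_le_mul_of_nonneg_left ?_ hK)
    rw [abs_of_nonpos (by linarith [hB.2] : b - U ≤ (0:ℝ))]
    linarith [hB.1]
  · rw [gammaFn_eq, if_neg (fun h => hB h.2)]
    simpa using mul_nonneg hK (sub_nonneg.2 hLU.le)

lemma sigmaJ_symm (L U r a b : ℝ) (j : ℕ) : sigmaJ L U r a b j = sigmaJ L U r b a j := by
  simp only [sigmaJ]
  ring_nf

lemma tauJ_symm (L U r a b : ℝ) (j : ℕ) : tauJ L U r a b j = tauJ L U r b a j := by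
  simp only [tauJ]
  ring_nf

lemma gammaFn_symm (L U r a b : ℝ) : gammaFn L U r a b = gammaFn L U r b a := by
  simp only [gammaFn]
  refine if_congr and_comm ?_ rfl
  exact congrArg (fun t => 1 - t) (tsum_congr fun k => by rw [sigmaJ_symm, tauJ_symm])

lemma gammaFn_lip_a {L U r : ℝ} (hLU : L < U) (hr : 0 < r) (b a a' : ℝ) :
    |gammaFn L U r a b - gammaFn L U r a' b| ≤ Kconst L U r * |a - a'| := by
  rw [gammaFn_symm L U r a b, gammaFn_symm L U r a' b]
  exact gammaFn_lip hLU hr b a a'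

lemma prod_lip {px qx py qy Kp Kq Bp Bq t : ℝ}
    (h1 : |px - py| ≤ Kp * t) (h2 : |qx - qy| ≤ Kq * t)
    (h3 : |px| ≤ Bp) (h4 : |qy| ≤ Bq) :
    |px * qx - py * qy| ≤ (Bp * Kq + Bq * Kp) * t := by
  have hBp : 0 ≤ Bp := (abs_nonneg _).trans h3
  have hBq : 0 ≤ Bq := (abs_nonneg _).trans h4
  calc |px * qx - py * qy| = |px * (qx - qy) + qy * (px - py)| := by ring_nf
    _ ≤ |px * (qx - qy)| + |qy * (px - py)| := abs_add_le _ _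
    _ = |px| * |qx - qy| + |qy| * |px - py| := by rw [abs_mul, abs_mul]
    _ ≤ Bp * (Kq * t) + Bq * (Kp * t) :=
        add_le_add (mul_le_mul h3 h2 (abs_nonneg _) hBp) (mul_le_mul h4 h1 (abs_nonneg _) hBq)
    _ = (Bp * Kq + Bq * Kp) * t := by ring
/-- For `L↓ < L↑ < U↓ < U↑`, `l > 0`, `0 < s < l`, `v ∈ ℝ`, the function `ρ` is Lipschitz
on `(L↓, U↑)` with constant at most `K_ρ = K_{1,2} + K_{3,4} + K_{5,6} + K_{7,8}`. -/
theorem rhoFn_lipschitz (Ldown Lup Udown Uup l s v : ℝ)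
    (h1 : Ldown < Lup) (h2 : Lup < Udown) (h3 : Udown < Uup)
    (hl : 0 < l) (hs : 0 < s) (hsl : s < l) :
    ∀ x ∈ Set.Ioo Ldown Uup, ∀ y ∈ Set.Ioo Ldown Uup,
      |rhoFn Ldown Lup Udown Uup l s v x - rhoFn Ldown Lup Udown Uup l s v y| ≤
        Krho Ldown Lup Udown Uup l s * |x - y| := by
  intro x _ y _
  have hls : 0 < l - s := by linarith
  have e1 : Ldown < Uup := by linarith
  have e2 : Lup < Uup := by linarith
  have e3 : Ldown < Udown := by linarith
  have e4 : Lup < Udown := h2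
  have H1 := prod_lip (gammaFn_lip e1 hs 0 x y) (gammaFn_lip_a e1 hls v x y)
    (gammaFn_abs e1 hs 0 x) (gammaFn_abs e1 hls y v)
  have H2 := prod_lip (gammaFn_lip e2 hs 0 x y) (gammaFn_lip_a e2 hls v x y)
    (gammaFn_abs e2 hs 0 x) (gammaFn_abs e2 hls y v)
  have H3 := prod_lip (gammaFn_lip e3 hs 0 x y) (gammaFn_lip_a e3 hls v x y)
    (gammaFn_abs e3 hs 0 x) (gammaFn_abs e3 hls y v)
  have H4 := prod_lip (gammaFn_lip e4 hs 0 x y) (gammaFn_lip_a e4 hls v x y)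
    (gammaFn_abs e4 hs 0 x) (gammaFn_abs e4 hls y v)
  have H1' := H1.trans (le_of_eq (by ring :
    (Kconst Ldown Uup s * (Uup - Ldown) * Kconst Ldown Uup (l-s)
      + Kconst Ldown Uup (l-s) * (Uup - Ldown) * Kconst Ldown Uup s) * |x - y|
    = 2 * Kconst Ldown Uup s * Kconst Ldown Uup (l-s) * (Uup - Ldown) * |x - y|))
  have H2' := H2.trans (le_of_eq (by ring :
    (Kconst Lup Uup s * (Uup - Lup) * Kconst Lup Uup (l-s)
      + Kconst Lup Uup (l-s) * (Uup - Lup) * Kconst Lup Uup s) * |x - y|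
    = 2 * Kconst Lup Uup s * Kconst Lup Uup (l-s) * (Uup - Lup) * |x - y|))
  have H3' := H3.trans (le_of_eq (by ring :
    (Kconst Ldown Udown s * (Udown - Ldown) * Kconst Ldown Udown (l-s)
      + Kconst Ldown Udown (l-s) * (Udown - Ldown) * Kconst Ldown Udown s) * |x - y|
    = 2 * Kconst Ldown Udown s * Kconst Ldown Udown (l-s) * (Udown - Ldown) * |x - y|))
  have H4' := H4.trans (le_of_eq (by ring :
    (Kconst Lup Udown s * (Udown - Lup) * Kconst Lup Udown (l-s)
      + Kconst Lup Udown (l-s) * (Udown - Lup) * Kconst Lup Udown s) * |x - y|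
    = 2 * Kconst Lup Udown s * Kconst Lup Udown (l-s) * (Udown - Lup) * |x - y|))
  have hexp : Krho Ldown Lup Udown Uup l s * |x - y|
      = 2 * Kconst Ldown Uup s * Kconst Ldown Uup (l-s) * (Uup - Ldown) * |x - y|
      + 2 * Kconst Lup Uup s * Kconst Lup Uup (l-s) * (Uup - Lup) * |x - y|
      + 2 * Kconst Ldown Udown s * Kconst Ldown Udown (l-s) * (Udown - Ldown) * |x - y|
      + 2 * Kconst Lup Udown s * Kconst Lup Udown (l-s) * (Udown - Lup) * |x - y| := by
    simp only [Krho]; ring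
  simp only [rhoFn]
  rw [hexp, abs_le]
  rw [abs_le] at H1' H2' H3' H4'
  constructor <;> linarith [H1'.1, H1'.2, H2'.1, H2'.2, H3'.1, H3'.2, H4'.1, H4'.2]
end

section
/- Let L < U be real numbers, r > 0, and b ∈ (L,U). The functions γ_n(a) := 1 − ∑_{j=1}^{n} (σ_j(a,b) − τ_j(a,b)) satisfy |γ_n′(a)| ≤ ∑_{j=1}^∞ K_j = K(L,U,r) for every n ≥ 1 and every a ∈ (L,U), where K_j := (8(U−L)j/r)·exp(−(2/r)(U−L)²(j−1)²); consequently each partial sum γ_n is Lipschitz on (L,U) with Lipschitz constant at most K(L,U,r). -/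
set_option maxHeartbeats 1000000 in
lemma termBound (L U r b : ℝ) (hLU : L < U) (hr : 0 < r) (hbL : L < b) (hbU : b < U)
    (a : ℝ) (haL : L < a) (haU : a < U) (t : ℝ) (ht : 0 ≤ t) :
    ∃ g : ℝ,
      HasDerivAt (fun a' =>
        (Real.exp (-(2/r) * (((U-L)*(t+1) + L - a') * ((U-L)*(t+1) + L - b))) +
         Real.exp (-(2/r) * (((U-L)*(t+1) - U + a') * ((U-L)*(t+1) - U + b)))) -
        (Real.exp (-(2*(U-L)*(t+1)/r) * ((U-L)*(t+1) + a' - b)) +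
         Real.exp (-(2*(U-L)*(t+1)/r) * ((U-L)*(t+1) + b - a')))) g a ∧
      |g| ≤ 8*(U-L)*(t+1)/r * Real.exp (-(2/r) * (U-L)^2 * t^2) := by
  have hD : 0 < U - L := sub_pos.mpr hLU
  have hrr : (0:ℝ) < 2/r := by positivity
  have h1 : HasDerivAt (fun a' => Real.exp (-(2/r) * (((U-L)*(t+1) + L - a') * ((U-L)*(t+1) + L - b))))
      (Real.exp (-(2/r) * (((U-L)*(t+1) + L - a) * ((U-L)*(t+1) + L - b))) * ((2/r) * ((U-L)*(t+1) + L - b))) a := by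
    have h := ((((hasDerivAt_id a).const_sub ((U-L)*(t+1) + L)).mul_const ((U-L)*(t+1) + L - b)).const_mul (-(2/r))).exp
    simp only [id_eq] at h
    convert h using 2
    ring
  have h2 : HasDerivAt (fun a' => Real.exp (-(2/r) * (((U-L)*(t+1) - U + a') * ((U-L)*(t+1) - U + b))))
      (Real.exp (-(2/r) * (((U-L)*(t+1) - U + a) * ((U-L)*(t+1) - U + b))) * (-(2/r) * ((U-L)*(t+1) - U + b))) a := by
    have h := ((((hasDerivAt_id a).const_add ((U-L)*(t+1) - U)).mul_const ((U-L)*(t+1) - U + b)).const_mul (-(2/r))).exp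
    simp only [id_eq] at h
    convert h using 2
    ring
  have h3 : HasDerivAt (fun a' => Real.exp (-(2*(U-L)*(t+1)/r) * ((U-L)*(t+1) + a' - b)))
      (Real.exp (-(2*(U-L)*(t+1)/r) * ((U-L)*(t+1) + a - b)) * (-(2*(U-L)*(t+1)/r))) a := by
    have h := ((((hasDerivAt_id a).const_add ((U-L)*(t+1))).sub_const b).const_mul (-(2*(U-L)*(t+1)/r))).exp
    simp only [id_eq] at h
    convert h using 2
    ring
  have h4 : HasDerivAt (fun a' => Real.exp (-(2*(U-L)*(t+1)/r) * ((U-L)*(t+1) + b - a')))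
      (Real.exp (-(2*(U-L)*(t+1)/r) * ((U-L)*(t+1) + b - a)) * (2*(U-L)*(t+1)/r)) a := by
    have h := (((hasDerivAt_id a).const_sub ((U-L)*(t+1) + b)).const_mul (-(2*(U-L)*(t+1)/r))).exp
    simp only [id_eq] at h
    convert h using 2
    ring
  refine ⟨_, (h1.add h2).sub (h3.add h4), ?_⟩
  set E := Real.exp (-(2/r) * (U-L)^2 * t^2) with hE
  have hEpos : (0:ℝ) < E := Real.exp_pos _
  have hM : (0:ℝ) < 2*(U-L)*(t+1)/r := by positivity
  have hDt : (0:ℝ) ≤ (U-L)*t := by positivity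
  have hb1 : |Real.exp (-(2/r) * (((U-L)*(t+1) + L - a) * ((U-L)*(t+1) + L - b))) * ((2/r) * ((U-L)*(t+1) + L - b))|
      ≤ E * (2*(U-L)*(t+1)/r) := by
    rw [abs_mul, abs_of_pos (Real.exp_pos _)]
    have hE1 : Real.exp (-(2/r) * (((U-L)*(t+1) + L - a) * ((U-L)*(t+1) + L - b))) ≤ E := by
      rw [hE]; apply Real.exp_le_exp.mpr
      have hx : (U-L)*t ≤ (U-L)*(t+1) + L - a := by nlinarith
      have hy : (U-L)*t ≤ (U-L)*(t+1) + L - b := by nlinarith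
      have hP : (U-L)*t*((U-L)*t) ≤ ((U-L)*(t+1) + L - a) * ((U-L)*(t+1) + L - b) :=
        mul_le_mul hx hy hDt (by nlinarith)
      nlinarith [mul_le_mul_of_nonneg_left hP hrr.le]
    have hc1 : |(2/r) * ((U-L)*(t+1) + L - b)| ≤ 2*(U-L)*(t+1)/r := by
      rw [abs_of_pos (by nlinarith : (0:ℝ) < (2/r) * ((U-L)*(t+1) + L - b)),
        (by ring : 2*(U-L)*(t+1)/r = 2/r * ((U-L)*(t+1)))]
      have := mul_le_mul_of_nonneg_left (show (U-L)*(t+1)+L-b ≤ (U-L)*(t+1) by nlinarith) hrr.le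
      linarith
    exact mul_le_mul hE1 hc1 (abs_nonneg _) hEpos.le
  have hb2 : |Real.exp (-(2/r) * (((U-L)*(t+1) - U + a) * ((U-L)*(t+1) - U + b))) * (-(2/r) * ((U-L)*(t+1) - U + b))|
      ≤ E * (2*(U-L)*(t+1)/r) := by
    rw [abs_mul, abs_of_pos (Real.exp_pos _)]
    have hE2 : Real.exp (-(2/r) * (((U-L)*(t+1) - U + a) * ((U-L)*(t+1) - U + b))) ≤ E := by
      rw [hE]; apply Real.exp_le_exp.mpr
      have hx : (U-L)*t ≤ (U-L)*(t+1) - U + a := by nlinarith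
      have hy : (U-L)*t ≤ (U-L)*(t+1) - U + b := by nlinarith
      have hP : (U-L)*t*((U-L)*t) ≤ ((U-L)*(t+1) - U + a) * ((U-L)*(t+1) - U + b) :=
        mul_le_mul hx hy hDt (by nlinarith)
      nlinarith [mul_le_mul_of_nonneg_left hP hrr.le]
    have hc2 : |(-(2/r) * ((U-L)*(t+1) - U + b))| ≤ 2*(U-L)*(t+1)/r := by
      rw [abs_of_neg (by nlinarith : (-(2/r) * ((U-L)*(t+1) - U + b)) < 0),
        (by ring : -(-(2/r) * ((U-L)*(t+1) - U + b)) = 2/r * ((U-L)*(t+1) - U + b)),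
        (by ring : 2*(U-L)*(t+1)/r = 2/r * ((U-L)*(t+1)))]
      have := mul_le_mul_of_nonneg_left (show (U-L)*(t+1)-U+b ≤ (U-L)*(t+1) by nlinarith) hrr.le
      linarith
    exact mul_le_mul hE2 hc2 (abs_nonneg _) hEpos.le
  have hb3 : |Real.exp (-(2*(U-L)*(t+1)/r) * ((U-L)*(t+1) + a - b)) * (-(2*(U-L)*(t+1)/r))|
      ≤ E * (2*(U-L)*(t+1)/r) := by
    rw [abs_mul, abs_of_pos (Real.exp_pos _), abs_neg, abs_of_pos hM]
    have hE3 : Real.exp (-(2*(U-L)*(t+1)/r) * ((U-L)*(t+1) + a - b)) ≤ E := by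
      rw [hE]; apply Real.exp_le_exp.mpr
      have hx : (U-L)*t ≤ (U-L)*(t+1) := by nlinarith
      have hy : (U-L)*t ≤ (U-L)*(t+1) + a - b := by nlinarith
      have hP : (U-L)*t*((U-L)*t) ≤ ((U-L)*(t+1)) * ((U-L)*(t+1) + a - b) :=
        mul_le_mul hx hy hDt (by nlinarith)
      have e1 : -(2*(U-L)*(t+1)/r) * ((U-L)*(t+1) + a - b) = -(2/r * (((U-L)*(t+1)) * ((U-L)*(t+1) + a - b))) := by ring
      have e2 : -(2/r)*(U-L)^2*t^2 = -(2/r * ((U-L)*t*((U-L)*t))) := by ring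
      rw [e1, e2]
      have := mul_le_mul_of_nonneg_left hP hrr.le
      linarith
    exact mul_le_mul_of_nonneg_right hE3 hM.le
  have hb4 : |Real.exp (-(2*(U-L)*(t+1)/r) * ((U-L)*(t+1) + b - a)) * (2*(U-L)*(t+1)/r)|
      ≤ E * (2*(U-L)*(t+1)/r) := by
    rw [abs_mul, abs_of_pos (Real.exp_pos _), abs_of_pos hM]
    have hE4 : Real.exp (-(2*(U-L)*(t+1)/r) * ((U-L)*(t+1) + b - a)) ≤ E := by
      rw [hE]; apply Real.exp_le_exp.mpr
      have hx : (U-L)*t ≤ (U-L)*(t+1) := by nlinarith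
      have hy : (U-L)*t ≤ (U-L)*(t+1) + b - a := by nlinarith
      have hP : (U-L)*t*((U-L)*t) ≤ ((U-L)*(t+1)) * ((U-L)*(t+1) + b - a) :=
        mul_le_mul hx hy hDt (by nlinarith)
      have e1 : -(2*(U-L)*(t+1)/r) * ((U-L)*(t+1) + b - a) = -(2/r * (((U-L)*(t+1)) * ((U-L)*(t+1) + b - a))) := by ring
      have e2 : -(2/r)*(U-L)^2*t^2 = -(2/r * ((U-L)*t*((U-L)*t))) := by ring
      rw [e1, e2]
      have := mul_le_mul_of_nonneg_left hP hrr.le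
      linarith
    exact mul_le_mul_of_nonneg_right hE4 hM.le
  refine (abs_sub _ _).trans ?_
  refine (add_le_add (abs_add_le _ _) (abs_add_le _ _)).trans ?_
  have heq : E * (2*(U-L)*(t+1)/r) + E * (2*(U-L)*(t+1)/r) + (E * (2*(U-L)*(t+1)/r) + E * (2*(U-L)*(t+1)/r))
      = 8*(U-L)*(t+1)/r * E := by ring
  linarith [hb1, hb2, hb3, hb4]


set_option maxHeartbeats 1000000 in
lemma Ksummable (L U r : ℝ) (hLU : L < U) (hr : 0 < r) :
    Summable (fun k : ℕ => ((k:ℝ)+1) * Real.exp (-(2/r) * (U-L)^2 * (k:ℝ)^2)) := by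
  have hD : (0:ℝ) < U - L := sub_pos.mpr hLU
  have hc : (0:ℝ) < (2/r) * (U-L)^2 := by positivity
  refine Summable.of_nonneg_of_le (fun k => by positivity) (fun k => ?_)
    ((Real.summable_pow_mul_exp_neg_nat_mul 1 hc).add
      (Real.summable_pow_mul_exp_neg_nat_mul 0 hc))
  have h1 : Real.exp (-(2/r)*(U-L)^2*(k:ℝ)^2) ≤ Real.exp (-((2/r) * (U-L)^2)*(k:ℝ)) := by
    apply Real.exp_le_exp.mpr
    have hk : (k:ℝ) ≤ (k:ℝ)^2 := by exact_mod_cast Nat.le_self_pow two_ne_zero k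
    nlinarith [mul_le_mul_of_nonneg_left hk hc.le]
  calc ((k:ℝ)+1) * Real.exp (-(2/r) * (U-L)^2 * (k:ℝ)^2)
      ≤ ((k:ℝ)+1) * Real.exp (-((2/r) * (U-L)^2)*(k:ℝ)) :=
        mul_le_mul_of_nonneg_left h1 (by positivity)
    _ = (k:ℝ)^1 * Real.exp (-((2/r) * (U-L)^2)*(k:ℝ))
        + (k:ℝ)^0 * Real.exp (-((2/r) * (U-L)^2)*(k:ℝ)) := by ring

/-- For `L < U`, `r > 0`, `b ∈ (L,U)`: the sum of the `K_j`'s equals `K(L,U,r)`, and for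
every `n ≥ 1` the partial sum `γ_n(a) = 1 - ∑_{j=1}^n (σ_j(a,b) - τ_j(a,b))` has its
derivative bounded by `K(L,U,r)` on `(L,U)`; consequently each `γ_n` is Lipschitz on
`(L,U)` with constant at most `K(L,U,r)`. (Series indexed by `j = k+1`, `k : ℕ`.) -/
theorem partial_sums_deriv_bound_and_lipschitz (L U r : ℝ) (hLU : L < U) (hr : 0 < r)
    (b : ℝ) (hb : b ∈ Set.Ioo L U) :
    (∑' k : ℕ, 8*(U-L)*((k:ℝ)+1)/r * Real.exp (-(2/r) * (U-L)^2 * (k:ℝ)^2))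
      = Kconst L U r ∧
    ∀ n : ℕ, 1 ≤ n →
      (∀ a ∈ Set.Ioo L U,
        |deriv (fun a' => 1 - ∑ k ∈ Finset.range n,
            (sigmaJ L U r a' b (k+1) - tauJ L U r a' b (k+1))) a| ≤ Kconst L U r) ∧
      (∀ a₁ ∈ Set.Ioo L U, ∀ a₂ ∈ Set.Ioo L U,
        |(1 - ∑ k ∈ Finset.range n, (sigmaJ L U r a₁ b (k+1) - tauJ L U r a₁ b (k+1)))
          - (1 - ∑ k ∈ Finset.range n, (sigmaJ L U r a₂ b (k+1) - tauJ L U r a₂ b (k+1)))|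
          ≤ Kconst L U r * |a₁ - a₂|) := by
  have hD : (0:ℝ) < U - L := sub_pos.mpr hLU
  have hSumK : Summable (fun k : ℕ => 8*(U-L)*((k:ℝ)+1)/r * Real.exp (-(2/r) * (U-L)^2 * (k:ℝ)^2)) :=
    ((Ksummable L U r hLU hr).mul_left (8*(U-L)/r)).congr (fun k => by ring)
  have hKnonneg : ∀ k : ℕ, (0:ℝ) ≤ 8*(U-L)*((k:ℝ)+1)/r * Real.exp (-(2/r) * (U-L)^2 * (k:ℝ)^2) :=
    fun k => by positivity
  have h1 : (∑' k : ℕ, 8*(U-L)*((k:ℝ)+1)/r * Real.exp (-(2/r) * (U-L)^2 * (k:ℝ)^2)) = Kconst L U r := by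
    rw [Kconst, ← tsum_mul_left]
    exact tsum_congr fun k => by ring
  refine ⟨h1, fun n hn => ?_⟩
  have key : ∀ a ∈ Set.Ioo L U, ∃ g : ℝ,
      HasDerivAt (fun a' => 1 - ∑ k ∈ Finset.range n,
        (sigmaJ L U r a' b (k+1) - tauJ L U r a' b (k+1))) g a ∧ |g| ≤ Kconst L U r := by
    intro a ha
    have hterm : ∀ k : ℕ, ∃ g : ℝ,
        HasDerivAt (fun a' => sigmaJ L U r a' b (k+1) - tauJ L U r a' b (k+1)) g a ∧
        |g| ≤ 8*(U-L)*((k:ℝ)+1)/r * Real.exp (-(2/r) * (U-L)^2 * (k:ℝ)^2) := by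
      intro k
      obtain ⟨g, hgd, hgb⟩ := termBound L U r b hLU hr hb.1 hb.2 a ha.1 ha.2 (k:ℝ) (Nat.cast_nonneg k)
      refine ⟨g, ?_, hgb⟩
      have hfun : (fun a' => sigmaJ L U r a' b (k+1) - tauJ L U r a' b (k+1))
          = (fun a' =>
            (Real.exp (-(2/r) * (((U-L)*((k:ℝ)+1) + L - a') * ((U-L)*((k:ℝ)+1) + L - b))) +
             Real.exp (-(2/r) * (((U-L)*((k:ℝ)+1) - U + a') * ((U-L)*((k:ℝ)+1) - U + b)))) -
            (Real.exp (-(2*(U-L)*((k:ℝ)+1)/r) * ((U-L)*((k:ℝ)+1) + a' - b)) +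
             Real.exp (-(2*(U-L)*((k:ℝ)+1)/r) * ((U-L)*((k:ℝ)+1) + b - a')))) := by
        funext a'
        simp only [sigmaJ, tauJ]
        push_cast
        ring_nf
      rw [hfun]
      exact hgd
    choose g hgd hgb using hterm
    refine ⟨-(∑ k ∈ Finset.range n, g k),
      HasDerivAt.const_sub 1 (HasDerivAt.fun_sum fun k _ => hgd k), ?_⟩
    rw [abs_neg]
    calc |∑ k ∈ Finset.range n, g k| ≤ ∑ k ∈ Finset.range n, |g k| :=
          Finset.abs_sum_le_sum_abs _ _
      _ ≤ ∑ k ∈ Finset.range n, (8*(U-L)*((k:ℝ)+1)/r * Real.exp (-(2/r) * (U-L)^2 * (k:ℝ)^2)) :=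
          Finset.sum_le_sum fun k _ => hgb k
      _ ≤ ∑' k : ℕ, 8*(U-L)*((k:ℝ)+1)/r * Real.exp (-(2/r) * (U-L)^2 * (k:ℝ)^2) :=
          Summable.sum_le_tsum _ (fun k _ => hKnonneg k) hSumK
      _ = Kconst L U r := h1
  constructor
  · intro a ha
    obtain ⟨g, hgd, hgb⟩ := key a ha
    rw [hgd.deriv]
    exact hgb
  · intro a₁ h1' a₂ h2'
    have hlip := Convex.norm_image_sub_le_of_norm_deriv_le
      (fun x hx => ((key x hx).choose_spec.1).differentiableAt)
      (fun x hx => by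
        rw [Real.norm_eq_abs, ((key x hx).choose_spec.1).deriv]
        exact (key x hx).choose_spec.2)
      (convex_Ioo L U) h2' h1'
    simpa [Real.norm_eq_abs] using hlip
end
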